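/- Let x, y ∈ ℝ with x < y and let u = π·χ_{(x,y)} be π times the indicator function of the interval (x, y). If u is the phase shift of a pair (μ, ν) of finite positive compactly supported Borel measures on ℝ, then there exist positive constants b and c such that μ = b·δ_x and ν = c·δ_y (Dirac masses at x and y). -/

import Mathlib

open MeasureTheory Set

/-- The Cauchy transform `𝒦μ(z) = (1/π) ∫ (t - z)⁻¹ dμ(t)` of a positive measure on `ℝ`. -/
noncomputable def cauchyTransform (μ : Measure ℝ) (z : ℂ) : ℂ :=
  (Real.pi : ℂ)⁻¹ * ∫ t, ((t : ℂ) - z)⁻¹ ∂μ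

/-- The Cauchy transform of the measure `u(t) dt` for a function `u : ℝ → ℝ`. -/
noncomputable def cauchyTransformFn (u : ℝ → ℝ) (z : ℂ) : ℂ :=
  (Real.pi : ℂ)⁻¹ * ∫ t, (u t : ℂ) * ((t : ℂ) - z)⁻¹

/-- `u : ℝ → [0, π]` measurable with compact support is the phase shift of the pair
`(μ, ν)` if `1 + π𝒦μ(z) = exp(𝒦u(z)) = (1 − π𝒦ν(z))⁻¹` for all `z ∈ ℂ₊`. -/
def IsPhaseShift (u : ℝ → ℝ) (μ ν : Measure ℝ) : Prop :=
  Measurable u ∧ (∀ x, u x ∈ Icc (0 : ℝ) Real.pi) ∧ HasCompactSupport u ∧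
    ∀ z : ℂ, 0 < z.im →
      1 + (Real.pi : ℂ) * cauchyTransform μ z = Complex.exp (cauchyTransformFn u z) ∧
      Complex.exp (cauchyTransformFn u z) = (1 - (Real.pi : ℂ) * cauchyTransform ν z)⁻¹

/-!
Integrating `(t - z)⁻¹` over `(x, y)` gives `exp 𝒦u(z) = (y - z) / (x - z)`, so the two
phase-shift identities say `∫ (t - z)⁻¹ dμ = (y - x) / (x - z)` and
`∫ (t - z)⁻¹ dν = (y - x) / (y - z)`: these are the Cauchy integrals of `(y - x) δ_x` and
`(y - x) δ_y`. It remains to see that a finite measure is determined by its Cauchy integral on the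
upper half-plane (Stieltjes inversion). The imaginary part at `a + iε` is the Poisson integral of
the measure; integrating it over `a ≤ s` gives `∫ (arctan ((s - t) / ε) + π / 2) dμ(t)`, which
tends to `π / 2 (μ (-∞, s) + μ (-∞, s])` as `ε → 0⁺`, and the right limits of this function of
`s` are the distribution function of `μ`.
-/

open Filter Topology Real

section CauchyKernel

lemma ofReal_sub_ne_zero {z : ℂ} (hz : z.im ≠ 0) (t : ℝ) : (t : ℂ) - z ≠ 0 := by
  intro h
  exact hz (by simpa using (congrArg Complex.im h).symm)

lemma norm_inv_ofReal_sub_le {z : ℂ} (hz : z.im ≠ 0) (t : ℝ) :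
    ‖((t : ℂ) - z)⁻¹‖ ≤ |z.im|⁻¹ := by
  rw [norm_inv]
  refine inv_anti₀ (abs_pos.2 hz) ?_
  simpa using Complex.abs_im_le_norm ((t : ℂ) - z)

lemma integrable_inv_ofReal_sub (μ : Measure ℝ) [IsFiniteMeasure μ] {z : ℂ} (hz : z.im ≠ 0) :
    Integrable (fun t : ℝ => ((t : ℂ) - z)⁻¹) μ :=
  .of_bound ((Complex.continuous_ofReal.sub continuous_const).inv₀
    (ofReal_sub_ne_zero hz)).aestronglyMeasurable _ (ae_of_all _ (norm_inv_ofReal_sub_le hz))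

lemma im_inv_ofReal_sub (z : ℂ) (t : ℝ) :
    (((t : ℂ) - z)⁻¹).im = z.im / ((t - z.re) ^ 2 + z.im ^ 2) := by
  simp [Complex.inv_im, Complex.normSq_apply]
  ring_nf

lemma integral_poisson_eq_im_integral_inv_ofReal_sub (μ : Measure ℝ) [IsFiniteMeasure μ]
    {ε : ℝ} (hε : ε ≠ 0) (a : ℝ) :
    ∫ t, ε / ((t - a) ^ 2 + ε ^ 2) ∂μ = (∫ t, ((t : ℂ) - (a + ε * Complex.I))⁻¹ ∂μ).im := by
  rw [← Complex.imCLM_apply, ← Complex.imCLM.integral_comp_comm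
    (integrable_inv_ofReal_sub μ (by simpa using hε))]
  simp only [Complex.imCLM_apply, im_inv_ofReal_sub]
  simp

end CauchyKernel

section PoissonKernel

variable {ε : ℝ}

lemma hasDerivAt_arctan_sub_div (hε : 0 < ε) (t a : ℝ) :
    HasDerivAt (fun a => arctan ((a - t) / ε)) (ε / ((t - a) ^ 2 + ε ^ 2)) a := by
  have h := (((hasDerivAt_id a).sub_const t).div_const ε).arctan
  refine h.congr_deriv ?_
  simp only [id]
  field_simp
  ring

lemma integrable_poisson (hε : 0 < ε) (t : ℝ) :
    Integrable (fun a : ℝ => ε / ((t - a) ^ 2 + ε ^ 2)) := by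
  have h := ((integrable_inv_one_add_sq.comp_div hε.ne').comp_sub_right t).const_mul ε⁻¹
  refine h.congr (ae_of_all _ fun a => ?_)
  field_simp
  ring

lemma setIntegral_Iic_poisson (hε : 0 < ε) (t s : ℝ) :
    ∫ a in Iic s, ε / ((t - a) ^ 2 + ε ^ 2) = arctan ((s - t) / ε) + π / 2 := by
  have hbot : Tendsto (fun a => arctan ((a - t) / ε)) atBot (𝓝 (-(π / 2))) :=
    (tendsto_nhds_of_tendsto_nhdsWithin tendsto_arctan_atBot).comp
      ((tendsto_atBot_add_const_right _ (-t) tendsto_id).atBot_div_const hε)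
  rw [integral_Iic_of_hasDerivAt_of_tendsto' (fun a _ => hasDerivAt_arctan_sub_div hε t a)
    (integrable_poisson hε t).integrableOn hbot, sub_neg_eq_add]

lemma integrable_poisson_of_isFiniteMeasure (μ : Measure ℝ) [IsFiniteMeasure μ] (hε : 0 < ε)
    (a : ℝ) : Integrable (fun t : ℝ => ε / ((t - a) ^ 2 + ε ^ 2)) μ := by
  have hcont : Continuous fun t : ℝ => ε / ((t - a) ^ 2 + ε ^ 2) :=
    continuous_const.div (by fun_prop) fun t => by positivity
  refine .of_bound hcont.aestronglyMeasurable ε⁻¹ (ae_of_all _ fun t => ?_)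
  rw [Real.norm_eq_abs, abs_of_nonneg (by positivity), div_le_iff₀ (by positivity)]
  field_simp
  nlinarith [sq_nonneg (t - a)]

lemma arctan_add_pi_div_two_pos (x : ℝ) : 0 < arctan x + π / 2 := by
  linarith [neg_pi_div_two_lt_arctan x]

lemma integrable_arctan_add_pi_div_two (μ : Measure ℝ) [IsFiniteMeasure μ] (f : ℝ → ℝ)
    (hf : Continuous f) : Integrable (fun t => arctan (f t) + π / 2) μ := by
  refine .of_bound (by fun_prop) π (ae_of_all _ fun t => ?_)
  rw [Real.norm_eq_abs, abs_of_pos (arctan_add_pi_div_two_pos _)]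
  linarith [arctan_lt_pi_div_two (f t)]

/-- Tonelli, using that `arctan ((s - t) / ε) + π / 2` is the integral of the Poisson kernel over
`Iic s`. -/
theorem ofReal_integral_arctan_eq_setLIntegral_poisson (μ : Measure ℝ) [IsFiniteMeasure μ]
    (hε : 0 < ε) (s : ℝ) :
    ENNReal.ofReal (∫ t, (arctan ((s - t) / ε) + π / 2) ∂μ) =
      ∫⁻ a in Iic s, ENNReal.ofReal (∫ t, ε / ((t - a) ^ 2 + ε ^ 2) ∂μ) := by
  have hmeas : AEMeasurable (Function.uncurry fun a t : ℝ =>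
      ENNReal.ofReal (ε / ((t - a) ^ 2 + ε ^ 2))) ((volume.restrict (Iic s)).prod μ) := by
    have : Continuous fun p : ℝ × ℝ => ε / ((p.2 - p.1) ^ 2 + ε ^ 2) :=
      continuous_const.div (by fun_prop) fun p => by positivity
    exact this.measurable.ennreal_ofReal.aemeasurable
  rw [ofReal_integral_eq_lintegral_ofReal (integrable_arctan_add_pi_div_two μ _ (by fun_prop))
      (ae_of_all _ fun t => (arctan_add_pi_div_two_pos _).le)]
  have hinner : ∀ a, ENNReal.ofReal (∫ t, ε / ((t - a) ^ 2 + ε ^ 2) ∂μ) =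
      ∫⁻ t, ENNReal.ofReal (ε / ((t - a) ^ 2 + ε ^ 2)) ∂μ := fun a =>
    ofReal_integral_eq_lintegral_ofReal (integrable_poisson_of_isFiniteMeasure μ hε a)
      (ae_of_all _ fun t => by positivity)
  simp_rw [hinner]
  rw [lintegral_lintegral_swap hmeas]
  refine lintegral_congr fun t => ?_
  rw [← ofReal_integral_eq_lintegral_ofReal (integrable_poisson hε t).integrableOn
    (ae_of_all _ fun a => by positivity), setIntegral_Iic_poisson hε t s]

lemma tendsto_arctan_sub_div_nhdsGT (s t : ℝ) :
    Tendsto (fun ε => arctan ((s - t) / ε) + π / 2) (𝓝[>] 0)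
      (𝓝 (π / 2 * ((Iio s).indicator 1 t + (Iic s).indicator 1 t))) := by
  rcases lt_trichotomy t s with hts | rfl | hst
  · have harg : Tendsto (fun ε => (s - t) / ε) (𝓝[>] 0) atTop := by
      simpa only [div_eq_mul_inv] using tendsto_inv_nhdsGT_zero.const_mul_atTop (sub_pos.2 hts)
    rw [indicator_of_mem (mem_Iio.2 hts), indicator_of_mem (mem_Iic.2 hts.le), Pi.one_apply,
      show π / 2 * (1 + 1) = π / 2 + π / 2 by ring]
    exact ((tendsto_nhds_of_tendsto_nhdsWithin tendsto_arctan_atTop).comp harg).add_const _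
  · simp
  · have harg : Tendsto (fun ε => (s - t) / ε) (𝓝[>] 0) atBot := by
      simpa only [div_eq_mul_inv] using
        tendsto_inv_nhdsGT_zero.const_mul_atTop_of_neg (sub_neg.2 hst)
    rw [indicator_of_notMem (s := Iio s) (not_lt.2 hst.le),
      indicator_of_notMem (s := Iic s) (not_le.2 hst),
      show π / 2 * (0 + 0) = -(π / 2) + π / 2 by ring]
    exact ((tendsto_nhds_of_tendsto_nhdsWithin tendsto_arctan_atBot).comp harg).add_const _

theorem tendsto_integral_arctan_sub_div_nhdsGT (μ : Measure ℝ) [IsFiniteMeasure μ] (s : ℝ) :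
    Tendsto (fun ε => ∫ t, (arctan ((s - t) / ε) + π / 2) ∂μ) (𝓝[>] 0)
      (𝓝 (π / 2 * (μ.real (Iio s) + μ.real (Iic s)))) := by
  have hlim : π / 2 * (μ.real (Iio s) + μ.real (Iic s)) =
      ∫ t, π / 2 * ((Iio s).indicator 1 t + (Iic s).indicator 1 t) ∂μ := by
    rw [integral_const_mul, integral_add ((integrable_const 1).indicator measurableSet_Iio)
      ((integrable_const 1).indicator measurableSet_Iic), integral_indicator_one measurableSet_Iio,
      integral_indicator_one measurableSet_Iic]
  rw [hlim]
  refine tendsto_integral_filter_of_dominated_convergence (fun _ => π)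
    (Eventually.of_forall fun ε => ?_) (Eventually.of_forall fun ε => ae_of_all _ fun t => ?_)
    (integrable_const π) (ae_of_all _ (tendsto_arctan_sub_div_nhdsGT s))
  · fun_prop
  · rw [Real.norm_eq_abs, abs_of_pos (arctan_add_pi_div_two_pos _)]
    linarith [arctan_lt_pi_div_two ((s - t) / ε)]

end PoissonKernel

section RightLimits

variable (μ : Measure ℝ) [IsFiniteMeasure μ]

theorem tendsto_measure_Iio_nhdsGT (a : ℝ) :
    Tendsto (fun s => μ (Iio s)) (𝓝[>] a) (𝓝 (μ (Iic a))) := by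
  have hinter : ⋂ r > a, Iio r = Iic a := by
    ext t
    simpa only [mem_iInter, mem_Iio] using
      ⟨fun h => le_of_forall_gt h, fun h r hr => h.trans_lt hr⟩
  rw [← hinter]
  exact tendsto_measure_biInter_gt (fun _ _ => measurableSet_Iio.nullMeasurableSet)
    (fun _ _ _ hij => Iio_subset_Iio hij) ⟨a + 1, by simp, measure_ne_top _ _⟩

theorem tendsto_measure_Iic_nhdsGT (a : ℝ) :
    Tendsto (fun s => μ (Iic s)) (𝓝[>] a) (𝓝 (μ (Iic a))) := by
  have hinter : ⋂ r > a, Iic r = Iic a := by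
    ext t
    simpa only [mem_iInter, mem_Iic] using
      ⟨fun h => le_of_forall_gt_imp_ge_of_dense h, fun h r hr => h.trans hr.le⟩
  rw [← hinter]
  exact tendsto_measure_biInter_gt (fun _ _ => measurableSet_Iic.nullMeasurableSet)
    (fun _ _ _ hij => Iic_subset_Iic.2 hij) ⟨a + 1, by simp, measure_ne_top _ _⟩

theorem tendsto_measureReal_Iio_add_Iic_nhdsGT (a : ℝ) :
    Tendsto (fun s => μ.real (Iio s) + μ.real (Iic s)) (𝓝[>] a) (𝓝 (2 * μ.real (Iic a))) := by
  rw [two_mul]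
  exact ((ENNReal.tendsto_toReal (measure_ne_top μ _)).comp (tendsto_measure_Iio_nhdsGT μ a)).add
    ((ENNReal.tendsto_toReal (measure_ne_top μ _)).comp (tendsto_measure_Iic_nhdsGT μ a))

end RightLimits

namespace MeasureTheory.Measure

theorem ext_of_measureReal_Iio_add_Iic {μ ρ : Measure ℝ} [IsFiniteMeasure μ]
    [IsFiniteMeasure ρ]
    (h : ∀ s, μ.real (Iio s) + μ.real (Iic s) = ρ.real (Iio s) + ρ.real (Iic s)) : μ = ρ := by
  refine ext_of_Iic μ ρ fun a => ?_
  have h2 : 2 * μ.real (Iic a) = 2 * ρ.real (Iic a) :=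
    tendsto_nhds_unique (tendsto_measureReal_Iio_add_Iic_nhdsGT μ a)
      ((tendsto_measureReal_Iio_add_Iic_nhdsGT ρ a).congr fun s => (h s).symm)
  exact (measureReal_eq_measureReal_iff (measure_ne_top μ _) (measure_ne_top ρ _)).1
    (mul_left_cancel₀ two_ne_zero h2)

theorem ext_of_integral_inv_ofReal_sub {μ ρ : Measure ℝ} [IsFiniteMeasure μ]
    [IsFiniteMeasure ρ]
    (h : ∀ z : ℂ, 0 < z.im → ∫ t, ((t : ℂ) - z)⁻¹ ∂μ = ∫ t, ((t : ℂ) - z)⁻¹ ∂ρ) : μ = ρ := by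
  have hpoisson : ∀ ε > 0, ∀ a : ℝ,
      ∫ t, ε / ((t - a) ^ 2 + ε ^ 2) ∂μ = ∫ t, ε / ((t - a) ^ 2 + ε ^ 2) ∂ρ := fun ε hε a => by
    rw [integral_poisson_eq_im_integral_inv_ofReal_sub μ hε.ne',
      integral_poisson_eq_im_integral_inv_ofReal_sub ρ hε.ne', h _ (by simpa using hε)]
  have harctan : ∀ ε > 0, ∀ s : ℝ,
      ∫ t, (arctan ((s - t) / ε) + π / 2) ∂μ = ∫ t, (arctan ((s - t) / ε) + π / 2) ∂ρ :=
    fun ε hε s => by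
      refine (ENNReal.ofReal_eq_ofReal_iff
        (integral_nonneg fun t => (arctan_add_pi_div_two_pos _).le)
        (integral_nonneg fun t => (arctan_add_pi_div_two_pos _).le)).1 ?_
      simp only [ofReal_integral_arctan_eq_setLIntegral_poisson _ hε, hpoisson ε hε]
  refine ext_of_measureReal_Iio_add_Iic fun s => ?_
  refine mul_left_cancel₀ (by positivity : π / 2 ≠ 0) (tendsto_nhds_unique
    (tendsto_integral_arctan_sub_div_nhdsGT μ s) ?_)
  exact (tendsto_integral_arctan_sub_div_nhdsGT ρ s).congr'
    (eventually_mem_nhdsWithin.mono fun ε hε => (harctan ε hε s).symm)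

end MeasureTheory.Measure

lemma intervalIntegral_inv_ofReal_sub {z : ℂ} (hz : z.im ≠ 0) (x y : ℝ) :
    ∫ t in x..y, ((t : ℂ) - z)⁻¹ = Complex.log (y - z) - Complex.log (x - z) := by
  have hcont : Continuous fun t : ℝ => ((t : ℂ) - z)⁻¹ :=
    (Complex.continuous_ofReal.sub continuous_const).inv₀ (ofReal_sub_ne_zero hz)
  refine intervalIntegral.integral_eq_sub_of_hasDerivAt
    (f := fun t : ℝ => Complex.log ((t : ℂ) - z)) (fun t _ => ?_)
    (hcont.intervalIntegrable x y)
  have hslit : (t : ℂ) - z ∈ Complex.slitPlane := Complex.mem_slitPlane_iff.2 (Or.inr (by simpa))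
  simpa using (((hasDerivAt_id (t : ℂ)).sub_const z).clog hslit).comp_ofReal

lemma ofReal_pi_mul_cauchyTransform (μ : Measure ℝ) (z : ℂ) :
    (π : ℂ) * cauchyTransform μ z = ∫ t, ((t : ℂ) - z)⁻¹ ∂μ := by
  rw [cauchyTransform, mul_inv_cancel_left₀ (Complex.ofReal_ne_zero.2 pi_ne_zero)]

lemma exp_cauchyTransformFn_pi_mul_indicator_Ioo {x y : ℝ} (hxy : x ≤ y) {z : ℂ}
    (hz : z.im ≠ 0) :
    Complex.exp (cauchyTransformFn (fun t => π * (Ioo x y).indicator (fun _ => (1 : ℝ)) t) z) =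
      (y - z) / (x - z) := by
  have hintegrand : (fun t : ℝ => ((π * (Ioo x y).indicator (fun _ => (1 : ℝ)) t : ℝ) : ℂ) *
      ((t : ℂ) - z)⁻¹) = (Ioo x y).indicator fun t => (π : ℂ) * ((t : ℂ) - z)⁻¹ := by
    ext t
    by_cases ht : t ∈ Ioo x y <;> simp [ht]
  rw [cauchyTransformFn, hintegrand, integral_indicator measurableSet_Ioo,
    ← integral_Ioc_eq_integral_Ioo, ← intervalIntegral.integral_of_le hxy,
    intervalIntegral.integral_const_mul, intervalIntegral_inv_ofReal_sub hz,
    inv_mul_cancel_left₀ (Complex.ofReal_ne_zero.2 pi_ne_zero), Complex.exp_sub,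
    Complex.exp_log (ofReal_sub_ne_zero hz y), Complex.exp_log (ofReal_sub_ne_zero hz x)]

lemma integral_inv_ofReal_sub_smul_dirac (c : NNReal) (x : ℝ) (z : ℂ) :
    ∫ t, ((t : ℂ) - z)⁻¹ ∂(c • Measure.dirac x) = (c : ℂ) * ((x : ℂ) - z)⁻¹ := by
  rw [integral_smul_nnreal_measure, integral_dirac, NNReal.smul_def, Complex.real_smul]

lemma integral_inv_ofReal_sub_of_isPhaseShift {x y : ℝ} (hxy : x ≤ y) {μ ν : Measure ℝ}
    (hu : IsPhaseShift (fun t => π * (Ioo x y).indicator (fun _ => (1 : ℝ)) t) μ ν) {z : ℂ}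
    (hz : 0 < z.im) :
    ∫ t, ((t : ℂ) - z)⁻¹ ∂μ = (y - x) * ((x : ℂ) - z)⁻¹ ∧
      ∫ t, ((t : ℂ) - z)⁻¹ ∂ν = (y - x) * ((y : ℂ) - z)⁻¹ := by
  obtain ⟨hμ, hν⟩ := hu.2.2.2 z hz
  rw [exp_cauchyTransformFn_pi_mul_indicator_Ioo hxy hz.ne', ofReal_pi_mul_cauchyTransform] at hμ hν
  have hx := ofReal_sub_ne_zero hz.ne' x
  have hy := ofReal_sub_ne_zero hz.ne' y
  constructor
  · rw [eq_sub_of_add_eq' hμ]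
    field_simp
    ring
  · rw [show ∫ t, ((t : ℂ) - z)⁻¹ ∂ν = 1 - ((y - z) / (x - z))⁻¹ by rw [hν, inv_inv]; ring]
    field_simp
    ring

theorem stmt5_general (x y : ℝ) (hxy : x < y) (μ ν : Measure ℝ)
    [IsFiniteMeasure μ] [IsFiniteMeasure ν]
    (hu : IsPhaseShift (fun t => Real.pi * (Ioo x y).indicator (fun _ => (1 : ℝ)) t) μ ν) :
    ∃ b c : NNReal, 0 < b ∧ 0 < c ∧
      μ = b • Measure.dirac x ∧ ν = c • Measure.dirac y := by
  have hc : 0 < (y - x).toNNReal := Real.toNNReal_pos.2 (sub_pos.2 hxy)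
  have hc' : (((y - x).toNNReal : ℝ) : ℂ) = y - x := by simp [hxy.le]
  refine ⟨(y - x).toNNReal, (y - x).toNNReal, hc, hc, ?_, ?_⟩
  · refine Measure.ext_of_integral_inv_ofReal_sub fun z hz => ?_
    rw [integral_inv_ofReal_sub_smul_dirac, hc',
      (integral_inv_ofReal_sub_of_isPhaseShift hxy.le hu hz).1]
  · refine Measure.ext_of_integral_inv_ofReal_sub fun z hz => ?_
    rw [integral_inv_ofReal_sub_smul_dirac, hc',
      (integral_inv_ofReal_sub_of_isPhaseShift hxy.le hu hz).2]

/-- If `u = π·χ_(x,y)` (with `x < y`) is the phase shift of a pair `(μ, ν)` of finite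
positive compactly supported Borel measures, then `μ = b·δ_x` and `ν = c·δ_y` for some
positive constants `b`, `c`. -/
theorem stmt5 (x y : ℝ) (hxy : x < y) (μ ν : Measure ℝ)
    [IsFiniteMeasure μ] [IsFiniteMeasure ν]
    (hμsupp : ∃ R : ℝ, μ (Icc (-R) R)ᶜ = 0) (hνsupp : ∃ R : ℝ, ν (Icc (-R) R)ᶜ = 0)
    (hu : IsPhaseShift (fun t => Real.pi * (Ioo x y).indicator (fun _ => (1 : ℝ)) t) μ ν) :
    ∃ b c : NNReal, 0 < b ∧ 0 < c ∧
      μ = b • Measure.dirac x ∧ ν = c • Measure.dirac y :=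
  stmt5_general x y hxy μ ν hu
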